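/- Let r > 0, θ ∈ (0, π), φ ∈ (0, π), L_x > 0, L_z > 0, η > 0, k₀ > 0, and set Φ = cos φ · sin θ, Ψ = sin φ · sin θ, Θ = cos θ. Then ∫_{−L_z/2}^{L_z/2} ∫_{−L_x}^{0} (η² k₀² / (4π)) · r·Ψ · (x² + z² − 2r(Φ·x + Θ·z) + r²)^(−3/2) dx dz = (η² k₀² / (4π)) · Σ_{u ∈ {−Φ, L_x/r + Φ}} Σ_{v ∈ {L_z/(2r) − Θ, L_z/(2r) + Θ}} arctan( u·v / (Ψ · √(Ψ² + u² + v²)) ). -/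

import Mathlib

/-- The function `ζ(Ψ, u, v) = arctan( u·v / (Ψ·√(Ψ² + u² + v²)) )` from the paper. -/
noncomputable def zeta (Ψ u v : ℝ) : ℝ :=
  Real.arctan (u * v / (Ψ * Real.sqrt (Ψ ^ 2 + u ^ 2 + v ^ 2)))

/-!
Since `Φ² + Ψ² + Θ² = 1`, the denominator is `(x - rΦ)² + (z - rΘ)² + a²` with `a = rΨ > 0`, so
after shifting the aperture the integrand is `a (x² + z² + a²)^{-3/2}`, the density of the solid
angle that a plane rectangle subtends from a point at height `a`. This density has the explicit
mixed antiderivative `ζ(a, x, z)`, i.e. `∂ₓ ∂_z ζ(a, x, z) = a (x² + z² + a²)^{-3/2}`, so the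
double integral is the alternating sum of `ζ` over the four corners. As `ζ(a, u, v)` is invariant
under scaling all three arguments by `r > 0` and odd in `u` and in `v`, this sum is the stated one.
-/

open Real intervalIntegral

lemma rpow_neg_three_halves {w : ℝ} (hw : 0 ≤ w) : w ^ (-(3 : ℝ) / 2) = (w * √w)⁻¹ := by
  rw [sqrt_eq_rpow, show -(3 : ℝ) / 2 = -(1 + 1 / 2) by norm_num, rpow_neg hw,
    rpow_add' hw (by norm_num), rpow_one]

noncomputable def zetaDerivV (a u v : ℝ) : ℝ :=
  a * u / ((a ^ 2 + v ^ 2) * √(a ^ 2 + u ^ 2 + v ^ 2))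

lemma hasDerivAt_zeta {a : ℝ} (ha : a ≠ 0) (u v : ℝ) :
    HasDerivAt (zeta a u) (zetaDerivV a u v) v := by
  have hw : 0 < a ^ 2 + u ^ 2 + v ^ 2 := by positivity
  have hS : √(a ^ 2 + u ^ 2 + v ^ 2) ^ 2 = a ^ 2 + u ^ 2 + v ^ 2 := sq_sqrt hw.le
  have h_radicand : HasDerivAt (fun t ↦ a ^ 2 + u ^ 2 + t ^ 2) (2 * v) v := by
    simpa using (hasDerivAt_pow 2 v).const_add (a ^ 2 + u ^ 2)
  have h_quot := ((hasDerivAt_id v).const_mul u).div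
    ((h_radicand.sqrt hw.ne').const_mul a) (by positivity)
  refine h_quot.arctan.congr_deriv ?_
  simp only [zetaDerivV, Pi.div_apply, id]
  field_simp
  rw [hS]
  ring

lemma hasDerivAt_zetaDerivV {a : ℝ} (ha : a ≠ 0) (u v : ℝ) :
    HasDerivAt (zetaDerivV a · v) (a * (u ^ 2 + v ^ 2 + a ^ 2) ^ (-(3 : ℝ) / 2)) u := by
  have hw : 0 < a ^ 2 + u ^ 2 + v ^ 2 := by positivity
  have hS : √(a ^ 2 + u ^ 2 + v ^ 2) ^ 2 = a ^ 2 + u ^ 2 + v ^ 2 := sq_sqrt hw.le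
  have h_radicand : HasDerivAt (fun t ↦ a ^ 2 + t ^ 2 + v ^ 2) (2 * u) u := by
    simpa using ((hasDerivAt_pow 2 u).const_add (a ^ 2)).add_const (v ^ 2)
  have h_quot := ((hasDerivAt_id u).const_mul a).div
    ((h_radicand.sqrt hw.ne').const_mul (a ^ 2 + v ^ 2)) (by positivity)
  refine h_quot.congr_deriv ?_
  rw [show u ^ 2 + v ^ 2 + a ^ 2 = a ^ 2 + u ^ 2 + v ^ 2 by ring, rpow_neg_three_halves hw.le]
  simp only [id]
  field_simp
  rw [hS]
  ring

lemma integral_integral_eq_zeta_sub {a : ℝ} (ha : a ≠ 0) (x₁ x₂ z₁ z₂ : ℝ) :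
    ∫ z in z₁..z₂, ∫ x in x₁..x₂, a * (x ^ 2 + z ^ 2 + a ^ 2) ^ (-(3 : ℝ) / 2)
      = zeta a x₂ z₂ - zeta a x₁ z₂ - (zeta a x₂ z₁ - zeta a x₁ z₁) := by
  have h_inner (z : ℝ) : ∫ x in x₁..x₂, a * (x ^ 2 + z ^ 2 + a ^ 2) ^ (-(3 : ℝ) / 2)
      = zetaDerivV a x₂ z - zetaDerivV a x₁ z := by
    refine integral_eq_sub_of_hasDerivAt (fun x _ ↦ hasDerivAt_zetaDerivV ha x z) ?_
    refine (continuous_const.mul ?_).intervalIntegrable _ _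
    exact (by fun_prop : Continuous fun x : ℝ ↦ x ^ 2 + z ^ 2 + a ^ 2).rpow_const
      fun x ↦ Or.inl (by positivity)
  have h_cont (x : ℝ) : Continuous (zetaDerivV a x) := by
    unfold zetaDerivV
    fun_prop (disch := intro; positivity)
  simp only [h_inner]
  exact integral_eq_sub_of_hasDerivAt
    (fun z _ ↦ (hasDerivAt_zeta ha x₂ z).sub (hasDerivAt_zeta ha x₁ z))
    (((h_cont x₂).sub (h_cont x₁)).intervalIntegrable _ _)

lemma integral_integral_comp_sub (f : ℝ → ℝ → ℝ) (p q x₁ x₂ z₁ z₂ : ℝ) :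
    ∫ z in z₁..z₂, ∫ x in x₁..x₂, f (x - p) (z - q)
      = ∫ z in z₁ - q..z₂ - q, ∫ x in x₁ - p..x₂ - p, f x z := by
  have h_inner (z : ℝ) : ∫ x in x₁..x₂, f (x - p) z = ∫ x in x₁ - p..x₂ - p, f x z :=
    integral_comp_sub_right (f · z) p
  simp only [h_inner]
  exact integral_comp_sub_right (fun z ↦ ∫ x in x₁ - p..x₂ - p, f x z) q

lemma zeta_mul {r : ℝ} (hr : 0 < r) (a u v : ℝ) :
    zeta (r * a) u v = zeta a (u / r) (v / r) := by
  have h_radicand :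
      (r * a) ^ 2 + u ^ 2 + v ^ 2 = r ^ 2 * (a ^ 2 + (u / r) ^ 2 + (v / r) ^ 2) := by
    field_simp
  unfold zeta
  rw [h_radicand, sqrt_mul (sq_nonneg r), sqrt_sq hr.le]
  congr 1
  field_simp

lemma zeta_neg_left (a u v : ℝ) : zeta a (-u) v = -zeta a u v := by
  simp only [zeta, neg_sq, neg_mul, neg_div, arctan_neg]

lemma zeta_neg_right (a u v : ℝ) : zeta a u (-v) = -zeta a u v := by
  simp only [zeta, neg_sq, mul_neg, neg_div, arctan_neg]

theorem receive_channel_gain_closed_form_general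
    (r θ φ Lx Lz η k₀ Φ Ψ Θ : ℝ)
    (hr : 0 < r) (hθ : θ ∈ Set.Ioo 0 Real.pi) (hφ : φ ∈ Set.Ioo 0 Real.pi)
    (hΦ : Φ = Real.cos φ * Real.sin θ) (hΨ : Ψ = Real.sin φ * Real.sin θ)
    (hΘ : Θ = Real.cos θ) :
    ∫ z in (-(Lz / 2))..(Lz / 2), ∫ x in (-Lx)..(0 : ℝ),
        η ^ 2 * k₀ ^ 2 / (4 * Real.pi) * (r * Ψ) *
          (x ^ 2 + z ^ 2 - 2 * r * (Φ * x + Θ * z) + r ^ 2) ^ (-(3 : ℝ) / 2)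
      = η ^ 2 * k₀ ^ 2 / (4 * Real.pi) *
          (zeta Ψ (-Φ) (Lz / (2 * r) - Θ) + zeta Ψ (-Φ) (Lz / (2 * r) + Θ)
            + zeta Ψ (Lx / r + Φ) (Lz / (2 * r) - Θ)
            + zeta Ψ (Lx / r + Φ) (Lz / (2 * r) + Θ)) := by
  have hΨ_pos : 0 < Ψ :=
    hΨ ▸ mul_pos (sin_pos_of_pos_of_lt_pi hφ.1 hφ.2) (sin_pos_of_pos_of_lt_pi hθ.1 hθ.2)
  have h_unit : Φ ^ 2 + Ψ ^ 2 + Θ ^ 2 = 1 := by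
    rw [hΦ, hΨ, hΘ]
    linear_combination sin θ ^ 2 * sin_sq_add_cos_sq φ + sin_sq_add_cos_sq θ
  have h_square (x z : ℝ) : x ^ 2 + z ^ 2 - 2 * r * (Φ * x + Θ * z) + r ^ 2
      = (x - r * Φ) ^ 2 + (z - r * Θ) ^ 2 + (r * Ψ) ^ 2 := by
    linear_combination (-r ^ 2) * h_unit
  simp only [h_square, mul_assoc _ (r * Ψ), integral_const_mul (η ^ 2 * k₀ ^ 2 / (4 * π))]
  rw [integral_integral_comp_sub
      (fun x z ↦ r * Ψ * (x ^ 2 + z ^ 2 + (r * Ψ) ^ 2) ^ (-(3 : ℝ) / 2)),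
    integral_integral_eq_zeta_sub (mul_pos hr hΨ_pos).ne']
  have hx₁ : (-Lx - r * Φ) / r = -(Lx / r + Φ) := by field_simp; ring
  have hx₂ : (0 - r * Φ) / r = -Φ := by field_simp; ring
  have hz₁ : (-(Lz / 2) - r * Θ) / r = -(Lz / (2 * r) + Θ) := by field_simp; ring
  have hz₂ : (Lz / 2 - r * Θ) / r = Lz / (2 * r) - Θ := by field_simp
  simp only [zeta_mul hr, hx₁, hx₂, hz₁, hz₂, zeta_neg_left, zeta_neg_right]
  ring

/-- The closed-form receive-aperture channel gain `g_r = ∫_{A_r} |a_r(𝐫)|² d𝐫`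
(Theorem 2 of the paper), over the receive aperture
`A_r = [−L_x, 0] × [−L_z/2, L_z/2]`, where
`|a_r(𝐫)|² = (η²k₀²/(4π)) · rΨ · (x² + z² − 2r(Φx + Θz) + r²)^{-3/2}` and
`Φ = cos φ sin θ`, `Ψ = sin φ sin θ`, `Θ = cos θ`. -/
theorem receive_channel_gain_closed_form
    (r θ φ Lx Lz η k₀ Φ Ψ Θ : ℝ)
    (hr : 0 < r) (hθ : θ ∈ Set.Ioo 0 Real.pi) (hφ : φ ∈ Set.Ioo 0 Real.pi)
    (hLx : 0 < Lx) (hLz : 0 < Lz) (hη : 0 < η) (hk : 0 < k₀)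
    (hΦ : Φ = Real.cos φ * Real.sin θ) (hΨ : Ψ = Real.sin φ * Real.sin θ)
    (hΘ : Θ = Real.cos θ) :
    ∫ z in (-(Lz / 2))..(Lz / 2), ∫ x in (-Lx)..(0 : ℝ),
        η ^ 2 * k₀ ^ 2 / (4 * Real.pi) * (r * Ψ) *
          (x ^ 2 + z ^ 2 - 2 * r * (Φ * x + Θ * z) + r ^ 2) ^ (-(3 : ℝ) / 2)
      = η ^ 2 * k₀ ^ 2 / (4 * Real.pi) *
          (zeta Ψ (-Φ) (Lz / (2 * r) - Θ) + zeta Ψ (-Φ) (Lz / (2 * r) + Θ)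
            + zeta Ψ (Lx / r + Φ) (Lz / (2 * r) - Θ)
            + zeta Ψ (Lx / r + Φ) (Lz / (2 * r) + Θ)) :=
  receive_channel_gain_closed_form_general r θ φ Lx Lz η k₀ Φ Ψ Θ hr hθ hφ hΦ hΨ hΘ
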